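/- arXiv:2605.28247 — 2 statements merged into one kernel-verified Lean document; each statement's English description precedes it below -/
import Mathlib

section
/- Let λ > 0 be a real number, let φ_1, …, φ_N ∈ ℝᵈ, and define the set function J(S) = log det(λ·I + ∑_{i∈S} φ_i φ_iᵀ) on finite subsets S ⊆ {1, …, N}. Then J is submodular: for all finite S ⊆ T ⊆ {1, …, N} and every index i ∉ T, J(S ∪ {i}) − J(S) ≥ J(T ∪ {i}) − J(T). -/
/-!
By the matrix determinant lemma, adding `i` to a design with positive definite matrix `A` raises
the objective by `log (1 + φᵢᵀ A⁻¹ φᵢ)`. Since `S ⊆ T` gives `A_S ≤ A_T` in the Loewner order, it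
suffices that `A ↦ uᵀ A⁻¹ u` is antitone; this follows from the variational formula
`uᵀ A⁻¹ u = max_x (2 xᵀu - xᵀ A x)`, whose objective decreases pointwise as `A` grows.
-/

open Matrix Finset

variable {n : Type*} [Fintype n]

theorem Matrix.det_add_vecMulVec [DecidableEq n] {R : Type*} [CommRing R] {A : Matrix n n R}
    (hA : IsUnit A.det) (u v : n → R) :
    (A + vecMulVec u v).det = A.det * (1 + v ⬝ᵥ (A⁻¹ *ᵥ u)) := by
  have hfactor : A + vecMulVec u v = A * (1 + vecMulVec (A⁻¹ *ᵥ u) v) := by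
    rw [Matrix.mul_add, Matrix.mul_one, mul_vecMulVec, mulVec_mulVec, mul_nonsing_inv _ hA,
      one_mulVec]
  rw [hfactor, det_mul, vecMulVec_eq Unit, det_one_add_replicateCol_mul_replicateRow]

namespace Matrix.PosDef

variable {A B : Matrix n n ℝ}

theorem dotProduct_mulVec_comm (hA : A.PosDef) (x y : n → ℝ) :
    x ⬝ᵥ (A *ᵥ y) = (A *ᵥ x) ⬝ᵥ y := by
  have hsymm : Aᵀ = A := by
    simpa [conjTranspose_eq_transpose_of_trivial] using hA.isHermitian.eq
  rw [dotProduct_mulVec, ← mulVec_transpose, hsymm]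

variable [DecidableEq n]

theorem dotProduct_inv_mulVec_nonneg (hA : A.PosDef) (u : n → ℝ) :
    0 ≤ u ⬝ᵥ (A⁻¹ *ᵥ u) := by
  simpa using hA.inv.posSemidef.dotProduct_mulVec_nonneg u

theorem two_mul_dotProduct_sub_le_dotProduct_inv_mulVec (hA : A.PosDef) (u x : n → ℝ) :
    2 * (x ⬝ᵥ u) - x ⬝ᵥ (A *ᵥ x) ≤ u ⬝ᵥ (A⁻¹ *ᵥ u) := by
  set y := A⁻¹ *ᵥ u
  have hAy : A *ᵥ y = u := by
    rw [mulVec_mulVec, mul_nonsing_inv _ hA.det_pos.ne'.isUnit, one_mulVec]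
  have hsq : 0 ≤ (x - y) ⬝ᵥ (A *ᵥ (x - y)) := by
    simpa using hA.posSemidef.dotProduct_mulVec_nonneg (x - y)
  have hexpand : (x - y) ⬝ᵥ (A *ᵥ (x - y)) = x ⬝ᵥ (A *ᵥ x) - 2 * (x ⬝ᵥ u) + u ⬝ᵥ y := by
    rw [mulVec_sub, dotProduct_sub, sub_dotProduct, sub_dotProduct, hA.dotProduct_mulVec_comm y x,
      hAy, dotProduct_comm u x, dotProduct_comm u y]
    ring
  linarith

theorem dotProduct_inv_mulVec_le_of_posSemidef_sub (hA : A.PosDef) (hAB : (B - A).PosSemidef)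
    (u : n → ℝ) :
    u ⬝ᵥ (B⁻¹ *ᵥ u) ≤ u ⬝ᵥ (A⁻¹ *ᵥ u) := by
  have hB : B.PosDef := by simpa using hA.add_posSemidef hAB
  set x := B⁻¹ *ᵥ u
  have hBx : B *ᵥ x = u := by
    rw [mulVec_mulVec, mul_nonsing_inv _ hB.det_pos.ne'.isUnit, one_mulVec]
  have hgap : 0 ≤ x ⬝ᵥ ((B - A) *ᵥ x) := by simpa using hAB.dotProduct_mulVec_nonneg x
  rw [sub_mulVec, dotProduct_sub, hBx] at hgap
  calc u ⬝ᵥ x = 2 * (x ⬝ᵥ u) - x ⬝ᵥ u := by rw [dotProduct_comm]; ring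
    _ ≤ 2 * (x ⬝ᵥ u) - x ⬝ᵥ (A *ᵥ x) := by linarith
    _ ≤ u ⬝ᵥ (A⁻¹ *ᵥ u) := hA.two_mul_dotProduct_sub_le_dotProduct_inv_mulVec u x

theorem log_det_add_vecMulVec_self_sub_log_det (hA : A.PosDef) (u : n → ℝ) :
    Real.log (A + vecMulVec u u).det - Real.log A.det = Real.log (1 + u ⬝ᵥ (A⁻¹ *ᵥ u)) := by
  have hgain : 0 < 1 + u ⬝ᵥ (A⁻¹ *ᵥ u) := by linarith [hA.dotProduct_inv_mulVec_nonneg u]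
  rw [det_add_vecMulVec hA.det_pos.ne'.isUnit, Real.log_mul hA.det_pos.ne' hgain.ne']
  ring

end Matrix.PosDef

theorem posSemidef_sum_vecMulVec_self {ι : Type*} (φ : ι → n → ℝ) (S : Finset ι) :
    (∑ j ∈ S, vecMulVec (φ j) (φ j)).PosSemidef :=
  posSemidef_sum S fun j _ => by simpa using posSemidef_vecMulVec_self_star (φ j)

variable [DecidableEq n]

def designMatrix {ι : Type*} (lam : ℝ) (φ : ι → n → ℝ) (S : Finset ι) : Matrix n n ℝ :=
  lam • 1 + ∑ j ∈ S, vecMulVec (φ j) (φ j)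

section designMatrix

variable {ι : Type*} {lam : ℝ} (φ : ι → n → ℝ)

theorem posDef_designMatrix (hlam : 0 < lam) (S : Finset ι) : (designMatrix lam φ S).PosDef :=
  (PosDef.one.smul hlam).add_posSemidef (posSemidef_sum_vecMulVec_self φ S)

theorem posSemidef_designMatrix_sub {S T : Finset ι} [DecidableEq ι] (hST : S ⊆ T) :
    (designMatrix lam φ T - designMatrix lam φ S).PosSemidef := by
  rw [designMatrix, designMatrix, add_sub_add_left_eq_sub, ← sum_sdiff_eq_sub hST]
  exact posSemidef_sum_vecMulVec_self φ (T \ S)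

theorem log_det_designMatrix_insert_sub [DecidableEq ι] (hlam : 0 < lam) {S : Finset ι} {i : ι}
    (hi : i ∉ S) :
    Real.log (designMatrix lam φ (insert i S)).det - Real.log (designMatrix lam φ S).det =
      Real.log (1 + φ i ⬝ᵥ ((designMatrix lam φ S)⁻¹ *ᵥ φ i)) := by
  have hinsert :
      designMatrix lam φ (insert i S) = designMatrix lam φ S + vecMulVec (φ i) (φ i) := by
    rw [designMatrix, designMatrix, sum_insert hi]
    abel
  rw [hinsert, (posDef_designMatrix φ hlam S).log_det_add_vecMulVec_self_sub_log_det]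

end designMatrix

/-- Submodularity of the D-optimal objective `J(S) = log det(λI + ∑_{i∈S} φ_i φ_iᵀ)`:
for `S ⊆ T` and `i ∉ T`, `J(S ∪ {i}) − J(S) ≥ J(T ∪ {i}) − J(T)`. -/
theorem logdet_submodular (d N : ℕ) (lam : ℝ) (hlam : 0 < lam)
    (φ : Fin N → (Fin d → ℝ)) (S T : Finset (Fin N)) (hST : S ⊆ T)
    (i : Fin N) (hi : i ∉ T) :
    Real.log (lam • (1 : Matrix (Fin d) (Fin d) ℝ) +
        ∑ j ∈ insert i T, vecMulVec (φ j) (φ j)).det -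
      Real.log (lam • (1 : Matrix (Fin d) (Fin d) ℝ) + ∑ j ∈ T, vecMulVec (φ j) (φ j)).det ≤
    Real.log (lam • (1 : Matrix (Fin d) (Fin d) ℝ) +
        ∑ j ∈ insert i S, vecMulVec (φ j) (φ j)).det -
      Real.log (lam • (1 : Matrix (Fin d) (Fin d) ℝ) + ∑ j ∈ S, vecMulVec (φ j) (φ j)).det := by
  have hiS : i ∉ S := fun h => hi (hST h)
  calc _ = Real.log (1 + φ i ⬝ᵥ ((designMatrix lam φ T)⁻¹ *ᵥ φ i)) :=
        log_det_designMatrix_insert_sub φ hlam hi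
    _ ≤ Real.log (1 + φ i ⬝ᵥ ((designMatrix lam φ S)⁻¹ *ᵥ φ i)) := by
        gcongr
        · linarith [(posDef_designMatrix φ hlam T).dotProduct_inv_mulVec_nonneg (φ i)]
        · exact (posDef_designMatrix φ hlam S).dotProduct_inv_mulVec_le_of_posSemidef_sub
            (posSemidef_designMatrix_sub φ hST) (φ i)
    _ = _ := (log_det_designMatrix_insert_sub φ hlam hiS).symm
end

section
/- Let E be a finite type and f : Finset E → ℝ a set function with f(∅) = 0 that is monotone (S ⊆ T implies f(S) ≤ f(T)) and submodular (for all S ⊆ T and e ∉ T, f(S ∪ {e}) − f(S) ≥ f(T ∪ {e}) − f(T)). Let K ≥ 1 and let S_0 = ∅, S_1, …, S_K be a greedy sequence: for each k < K there is an element e_k ∉ S_k with S_{k+1} = S_k ∪ {e_k} and f(S_k ∪ {e_k}) ≥ f(S_k ∪ {e}) for every e ∈ E. Then for every T ⊆ E with |T| ≤ K, f(S_K) ≥ (1 − (1 − 1/K)^K) · f(T); in particular f(S_K) ≥ (1 − e^{−1}) · f(T). -/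
open Finset

/-- Nemhauser–Wolsey–Fisher `(1 − 1/e)` guarantee: for a normalized monotone
submodular set function `f` on a finite ground set `E` and a greedy sequence
`S_0 = ∅, S_1, …, S_K` (each step adds an element maximizing the value of the
augmented set), every `T` with `|T| ≤ K` satisfies
`f(S_K) ≥ (1 − (1 − 1/K)^K)·f(T) ≥ (1 − e^{−1})·f(T)`. -/
theorem greedy_submodular_guarantee (E : Type*) [Fintype E] [DecidableEq E]
    (f : Finset E → ℝ)
    (h0 : f ∅ = 0)
    (hmono : ∀ S T : Finset E, S ⊆ T → f S ≤ f T)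
    (hsub : ∀ S T : Finset E, S ⊆ T → ∀ e ∉ T,
      f (insert e T) - f T ≤ f (insert e S) - f S)
    (K : ℕ) (hK : 1 ≤ K)
    (Sseq : ℕ → Finset E) (hS0 : Sseq 0 = ∅)
    (e : ℕ → E)
    (hgreedy : ∀ k < K, e k ∉ Sseq k ∧ Sseq (k + 1) = insert (e k) (Sseq k) ∧
      ∀ x : E, f (insert x (Sseq k)) ≤ f (insert (e k) (Sseq k)))
    (T : Finset E) (hT : T.card ≤ K) :
    (1 - (1 - 1 / (K : ℝ)) ^ K) * f T ≤ f (Sseq K) ∧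
    (1 - Real.exp (-1)) * f T ≤ f (Sseq K) := by
  have hKpos : (0:ℝ) < K := by exact_mod_cast hK
  have hKne : (K:ℝ) ≠ 0 := ne_of_gt hKpos
  have hinv : 1 / (K:ℝ) ≤ 1 := by
    rw [div_le_one hKpos]; exact_mod_cast hK
  have hnn : (0:ℝ) ≤ 1 - 1/(K:ℝ) := by linarith
  -- submodular sum bound
  have key : ∀ (S T' : Finset E),
      f (S ∪ T') - f S ≤ ∑ x ∈ T' \ S, (f (insert x S) - f S) := by
    intro S T'
    induction T' using Finset.induction_on with
    | empty => simp
    | @insert a T' ha ih =>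
      by_cases haS : a ∈ S
      · have h1 : S ∪ insert a T' = S ∪ T' := by
          rw [Finset.union_insert, Finset.insert_eq_self.mpr (Finset.mem_union_left _ haS)]
        have h2 : insert a T' \ S = T' \ S := Finset.insert_sdiff_of_mem _ haS
        rw [h1, h2]; exact ih
      · have haST : a ∉ S ∪ T' := by simp [haS, ha]
        have hsubm := hsub S (S ∪ T') Finset.subset_union_left a haST
        have hmem : a ∉ T' \ S := by simp [ha]
        have hsd : insert a T' \ S = insert a (T' \ S) := Finset.insert_sdiff_of_notMem _ haS
        rw [hsd, Finset.sum_insert hmem]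
        have h1 : S ∪ insert a T' = insert a (S ∪ T') := Finset.union_insert ..
        rw [h1]
        linarith
  -- per-step bound
  have hstep : ∀ k < K, f T - f (Sseq k) ≤ K * (f (Sseq (k+1)) - f (Sseq k)) := by
    intro k hk
    obtain ⟨hek, hSk1, hmax⟩ := hgreedy k hk
    have hδ0 : 0 ≤ f (Sseq (k+1)) - f (Sseq k) := by
      rw [hSk1]
      have := hmono (Sseq k) (insert (e k) (Sseq k)) (Finset.subset_insert _ _)
      linarith
    have h1 : f T ≤ f (Sseq k ∪ T) := hmono _ _ Finset.subset_union_right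
    have h2 := key (Sseq k) T
    have h3 : ∑ x ∈ T \ Sseq k, (f (insert x (Sseq k)) - f (Sseq k))
        ≤ (T \ Sseq k).card • (f (Sseq (k+1)) - f (Sseq k)) := by
      apply Finset.sum_le_card_nsmul
      intro x _
      have := hmax x
      rw [hSk1]
      linarith
    have hcard : ((T \ Sseq k).card : ℝ) ≤ (K : ℝ) := by
      exact_mod_cast le_trans (Finset.card_le_card (Finset.sdiff_subset)) hT
    have h4 : ((T \ Sseq k).card : ℝ) * (f (Sseq (k+1)) - f (Sseq k))
        ≤ (K : ℝ) * (f (Sseq (k+1)) - f (Sseq k)) :=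
      mul_le_mul_of_nonneg_right hcard hδ0
    rw [nsmul_eq_mul] at h3
    linarith
  -- main induction
  have main : ∀ k, k ≤ K → f T - f (Sseq k) ≤ (1 - 1/(K:ℝ))^k * f T := by
    intro k
    induction k with
    | zero => intro _; simp [hS0, h0]
    | succ k ih =>
      intro hk1
      have hkK : k < K := hk1
      have ha := ih (le_of_lt hkK)
      have hs := hstep k hkK
      have hdiv : (f T - f (Sseq k)) / K ≤ f (Sseq (k+1)) - f (Sseq k) := by
        rw [div_le_iff₀ hKpos]; linarith [hs]
      have hb : f T - f (Sseq (k+1)) ≤ (1 - 1/(K:ℝ)) * (f T - f (Sseq k)) := by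
        have heq : (1/(K:ℝ)) * (f T - f (Sseq k)) = (f T - f (Sseq k))/K := by ring
        rw [sub_mul, one_mul, heq]
        linarith [hdiv]
      calc f T - f (Sseq (k+1)) ≤ (1 - 1/(K:ℝ)) * (f T - f (Sseq k)) := hb
        _ ≤ (1 - 1/(K:ℝ)) * ((1 - 1/(K:ℝ))^k * f T) := mul_le_mul_of_nonneg_left ha hnn
        _ = (1 - 1/(K:ℝ))^(k+1) * f T := by ring
  have hmain := main K le_rfl
  have hfT : 0 ≤ f T := by
    have := hmono ∅ T (Finset.empty_subset T)
    rw [h0] at this; exact this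
  have first : (1 - (1 - 1 / (K : ℝ)) ^ K) * f T ≤ f (Sseq K) := by nlinarith
  refine ⟨first, ?_⟩
  have hpow : (1 - 1/(K:ℝ))^K ≤ Real.exp (-1) := by
    have h1 : (1:ℝ) - 1/K ≤ Real.exp (-(1/K)) := by
      have := Real.add_one_le_exp (-(1/(K:ℝ)))
      linarith
    have h2 : (1 - 1/(K:ℝ))^K ≤ (Real.exp (-(1/(K:ℝ))))^K := pow_le_pow_left₀ hnn h1 K
    have h3 : (Real.exp (-(1/(K:ℝ))))^K = Real.exp ((K:ℝ) * (-(1/(K:ℝ)))) :=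
      (Real.exp_nat_mul _ K).symm
    have h4 : (K:ℝ) * (-(1/(K:ℝ))) = -1 := by field_simp
    rw [h3, h4] at h2
    exact h2
  calc (1 - Real.exp (-1)) * f T ≤ (1 - (1 - 1 / (K : ℝ)) ^ K) * f T :=
        mul_le_mul_of_nonneg_right (by linarith) hfT
    _ ≤ f (Sseq K) := first
end
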